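/- arXiv:1704.06558 — 2 statements merged into one kernel-verified Lean document; each statement's English description precedes it below -/
import Mathlib

section
/- Let R be a real closed field (or more generally an ordered field) with a convex valuation ring O_R with maximal ideal M_R, and let g : O_R → O_R be a differentiable function such that g'(x) ∈ O_R for all x ∈ O_R and the residue res(g'(x)) is constant. If moreover g satisfies the Mean Value Theorem (for any x ≠ x' in O_R there exists x'' in O_R with g(x) - g(x') = g'(x'')(x - x')), then for all distinct x, x' ∈ O_R: v(g(x) - g(x') - g'(0)(x - x')) > v(x - x'), where v is the valuation associated to O_R. -/
/-! By the Mean Value Theorem, `g x - g x' - g' 0 * (x - x') = (g' x'' - g' 0) * (x - x')`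
for some `x''` in `O_R`, and the first factor lies in `M_R` because the residue of `g'` is
constant; multiplying by an element of positive value strictly raises the value. -/

theorem lt_map_mul_of_pos {M Γ : Type*} [Mul M]
    [AddCommGroup Γ] [LinearOrder Γ] [IsOrderedAddMonoid Γ]
    (v : M → WithTop Γ) (hvmul : ∀ x y : M, v (x * y) = v x + v y)
    {a b : M} (ha : 0 < v a) (hb : v b ≠ ⊤) : v b < v (a * b) := by
  calc v b = 0 + v b := (zero_add _).symm
    _ < v a + v b := WithTop.add_lt_add_right hb ha
    _ = v (a * b) := (hvmul a b).symm

theorem stmt2_general {R : Type*} [Field R]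
    {Γ : Type*} [AddCommGroup Γ] [LinearOrder Γ] [IsOrderedAddMonoid Γ]
    (v : R → WithTop Γ)
    (hv0 : ∀ x : R, v x = ⊤ ↔ x = 0)
    (hvmul : ∀ x y : R, v (x * y) = v x + v y)
    (g g' : R → R)
    (hres : ∀ x : R, 0 ≤ v x → 0 < v (g' x - g' 0))
    (hMVT : ∀ x x' : R, 0 ≤ v x → 0 ≤ v x' → x ≠ x' →
      ∃ x'' : R, 0 ≤ v x'' ∧ g x - g x' = g' x'' * (x - x')) :
    ∀ x x' : R, 0 ≤ v x → 0 ≤ v x' → x ≠ x' →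
      v (x - x') < v (g x - g x' - g' 0 * (x - x')) := by
  intro x x' hx hx' hne
  obtain ⟨x'', hx'', hmvt⟩ := hMVT x x' hx hx' hne
  have herror : g x - g x' - g' 0 * (x - x') = (g' x'' - g' 0) * (x - x') := by
    rw [hmvt]; ring
  rw [herror]
  exact lt_map_mul_of_pos v hvmul (hres x'' hx'') ((hv0 _).not.mpr (sub_ne_zero.mpr hne))

/-- Let `R` be an ordered field with a convex valuation ring `O_R`, encoded via the
associated valuation `v` (so `x ∈ O_R ↔ 0 ≤ v x` and `x ∈ M_R ↔ 0 < v x`, and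
`res (g' x)` constant means `0 < v (g' x - g' 0)`). If `g : O_R → O_R` is differentiable with
derivative `g'` taking values in `O_R`, of constant residue, and satisfying the Mean Value
Theorem on `O_R`, then for all distinct `x, x' ∈ O_R`:
`v (g x - g x' - g' 0 * (x - x')) > v (x - x')`. -/
theorem stmt2 {R : Type*} [Field R] [LinearOrder R] [IsStrictOrderedRing R]
    {Γ : Type*} [AddCommGroup Γ] [LinearOrder Γ] [IsOrderedAddMonoid Γ]
    (v : R → WithTop Γ)
    (hv0 : ∀ x : R, v x = ⊤ ↔ x = 0)
    (hvmul : ∀ x y : R, v (x * y) = v x + v y)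
    (hvadd : ∀ x y : R, min (v x) (v y) ≤ v (x + y))
    (g g' : R → R)
    (hgO : ∀ x : R, 0 ≤ v x → 0 ≤ v (g x))
    (hg'O : ∀ x : R, 0 ≤ v x → 0 ≤ v (g' x))
    (hres : ∀ x : R, 0 ≤ v x → 0 < v (g' x - g' 0))
    (hMVT : ∀ x x' : R, 0 ≤ v x → 0 ≤ v x' → x ≠ x' →
      ∃ x'' : R, 0 ≤ v x'' ∧ g x - g x' = g' x'' * (x - x')) :
    ∀ x x' : R, 0 ≤ v x → 0 ≤ v x' → x ≠ x' →
      v (x - x') < v (g x - g x' - g' 0 * (x - x')) :=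
  stmt2_general v hv0 hvmul g g' hres hMVT
end

section
/- Let K be a valued field and S_0 ⊆ K a finite nonempty set. If b ∈ K and s ∈ S_0 satisfies v(b - s) = max{v(b - t) : t ∈ S_0}, and B is an open ball disjoint from S_0 containing b, then rv(x - s) = rv(b - s) for all x ∈ B. -/
/-- `rv x = rv x'` in `RV = K^×/(1+M) ∪ {0}`, via the standard characterization:
`x = x' = 0` or `v (x - x') > v x`. -/
def rvEq {K : Type*} [Field K] {Γ : Type*} [AddCommGroup Γ] [LinearOrder Γ] [IsOrderedAddMonoid Γ]
    (v : K → WithTop Γ) (x y : K) : Prop :=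
  (x = 0 ∧ y = 0) ∨ v x < v (x - y)

/-- Let `S₀ ⊆ K` be finite and nonempty, `b ∈ K`, and `s ∈ S₀` with
`v (b - s) = max {v (b - t) : t ∈ S₀}`. If `B` is an open ball containing `b` and disjoint
from `S₀`, then `rv (x - s) = rv (b - s)` for all `x ∈ B`. -/
theorem stmt9 {K : Type*} [Field K] {Γ : Type*} [AddCommGroup Γ] [LinearOrder Γ] [IsOrderedAddMonoid Γ]
    (v : K → WithTop Γ)
    (hv0 : ∀ x : K, v x = ⊤ ↔ x = 0)
    (hvmul : ∀ x y : K, v (x * y) = v x + v y)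
    (hvadd : ∀ x y : K, min (v x) (v y) ≤ v (x + y))
    (S0 : Finset K) (hS0 : S0.Nonempty)
    (b s : K) (hs : s ∈ S0) (hmax : ∀ t ∈ S0, v (b - t) ≤ v (b - s))
    (B : Set K) (b₀ : K) (γ : Γ) (hB : B = {x : K | (γ : WithTop Γ) < v (x - b₀)})
    (hbB : b ∈ B) (hdisj : ∀ t ∈ S0, t ∉ B) :
    ∀ x ∈ B, rvEq v (x - s) (b - s) := by
  -- basic facts
  have hv1 : v 1 = 0 := by
    have h := hvmul 1 1
    rw [one_mul] at h
    have hne : v 1 ≠ ⊤ := by simp [hv0]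
    cases hA : v 1 with
    | top => exact absurd hA hne
    | coe a =>
      rw [hA] at h
      have : a + 0 = a + a := by rw [add_zero]; exact_mod_cast h
      have : a = 0 := (add_left_cancel this).symm
      simp [this]
  have hvneg : ∀ y : K, v (-y) = v y := by
    intro y
    have hm : v ((-1 : K) * (-1)) = v (-1) + v (-1) := hvmul _ _
    rw [neg_one_mul, neg_neg, hv1] at hm
    have hne : v (-1 : K) ≠ ⊤ := by simp [hv0]
    have hmo : v (-1 : K) = 0 := by
      cases hA : v (-1 : K) with
      | top => exact absurd hA hne
      | coe a =>
        rw [hA] at hm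
        have h0 : a + a = 0 := by exact_mod_cast hm.symm
        have : a = 0 := by
          rcases lt_trichotomy a 0 with h|h|h
          · exact absurd (add_neg h h) (by simp [h0])
          · exact h
          · exact absurd (add_pos h h) (by simp [h0])
        simp [this]
    have := hvmul (-1 : K) y
    rw [neg_one_mul, hmo, zero_add] at this
    exact this
  have hkey : ∀ x y : K, v y < v x → v (x + y) = v y := by
    intro x y hlt
    refine le_antisymm ?_ ?_
    · by_contra hgt
      push_neg at hgt
      have h2 := hvadd (x + y) (-x)
      rw [show x + y + -x = y by ring, hvneg] at h2
      exact absurd (lt_min hgt hlt) (not_lt.mpr h2)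
    · have := hvadd x y
      rwa [min_eq_right hlt.le] at this
  intro x hx
  rw [hB] at hx hbB hdisj
  have hxb₀ : (γ : WithTop Γ) < v (x - b₀) := hx
  have hbb₀ : (γ : WithTop Γ) < v (b - b₀) := hbB
  have hsb₀ : v (s - b₀) ≤ γ := not_lt.mp (hdisj s hs)
  have hb₀s : v (b₀ - s) ≤ γ := by rwa [show b₀ - s = -(s - b₀) by ring, hvneg]
  -- v (x - s) = v (b₀ - s) ≤ γ
  have hxs : v (x - s) ≤ γ := by
    have h := hkey (x - b₀) (b₀ - s) (lt_of_le_of_lt hb₀s hxb₀)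
    rw [show x - b₀ + (b₀ - s) = x - s by ring] at h
    rw [h]; exact hb₀s
  -- v (x - b) > γ
  have hxb : (γ : WithTop Γ) < v (x - b) := by
    have h := hvadd (x - b₀) (-(b - b₀))
    rw [hvneg, show x - b₀ + -(b - b₀) = x - b by ring] at h
    exact lt_of_lt_of_le (lt_min hxb₀ hbb₀) h
  right
  rw [show x - s - (b - s) = x - b by ring]
  exact lt_of_le_of_lt hxs hxb
end
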